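/- arXiv:2502.06400 — 9 statements merged into one kernel-verified Lean document; each statement's English description precedes it below -/
import Mathlib

section
/- Let G be a finite group, q a prime divisor of |G|, and Q a Sylow q-subgroup of G with |Q| = q^m. If Q is cyclic and G has exactly t Sylow q-subgroups, then the number of elements g in G with g^(q^m) = 1 is at least q^m + (t-1)(q^m - q^(m-1)). -/
theorem stmt_0 (G : Type*) [Group G] [Finite G] (q : ℕ) (hq : q.Prime)
    (hdvd : q ∣ Nat.card G) (Q : Sylow q G) (m : ℕ) (hm : 1 ≤ m)
    (hQcard : Nat.card Q = q ^ m) (hQcyc : IsCyclic Q)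
    (t : ℕ) (ht : t = Nat.card (Sylow q G)) :
    q ^ m + (t - 1) * (q ^ m - q ^ (m - 1)) ≤
      Nat.card {g : G | g ^ (q ^ m) = 1} := by
  classical
  have hfq : Fact q.Prime := ⟨hq⟩
  have : Fintype G := Fintype.ofFinite G
  set n : ℕ := q ^ m with hn
  -- all Sylow subgroups have cardinality n
  have hcard : ∀ P : Sylow q G, Nat.card P = n := fun P => by
    rw [P.card_eq_multiplicity, ← Q.card_eq_multiplicity, hQcard]
  have hcyc : ∀ P : Sylow q G, IsCyclic P := fun P =>
    isCyclic_of_surjective _ (Sylow.equiv Q P).surjective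
  -- uniqueness: element of order n determines its Sylow subgroup
  have huniq : ∀ (P P' : Sylow q G) (g : G), g ∈ (P : Subgroup G) →
      g ∈ (P' : Subgroup G) → orderOf g = n → P = P' := by
    intro P P' g hP hP' hord
    have key : ∀ R : Sylow q G, g ∈ (R : Subgroup G) → Subgroup.zpowers g = R := by
      intro R hR
      have hle : Subgroup.zpowers g ≤ (R : Subgroup G) :=
        (Subgroup.zpowers_le).mpr hR
      have hc : Nat.card (Subgroup.zpowers g) = Nat.card (R : Subgroup G) := by
        rw [Nat.card_zpowers, hord, hcard R]
      exact Subgroup.eq_of_le_of_card_ge hle hc.ge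
    exact Sylow.ext ((key P hP).symm.trans (key P' hP'))
  -- finsets
  let T : Finset G := Finset.univ.filter (fun g => g ^ n = 1)
  let gens : Sylow q G → Finset G := fun P =>
    Finset.univ.filter (fun g => g ∈ (P : Subgroup G) ∧ orderOf g = n)
  let QF : Finset G := Finset.univ.filter (fun g => g ∈ (Q : Subgroup G))
  have hQFcard : QF.card = n := by
    rw [← hQcard]
    rw [Nat.card_eq_fintype_card, Fintype.card_subtype]
  have hgenscard : ∀ P : Sylow q G, (gens P).card = Nat.totient n := by
    intro P
    have := hcyc P
    have hdvd' : n ∣ Fintype.card (P : Subgroup G) := by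
      rw [← Nat.card_eq_fintype_card, hcard P]
    have h1 : (Finset.univ.filter (fun a : (P : Subgroup G) => orderOf a = n)).card
        = Nat.totient n := IsCyclic.card_orderOf_eq_totient hdvd'
    have e : {g : G // g ∈ (P : Subgroup G) ∧ orderOf g = n} ≃
        {a : (P : Subgroup G) // orderOf a = n} :=
      { toFun := fun x => ⟨⟨x.1, x.2.1⟩, by rw [Subgroup.orderOf_mk]; exact x.2.2⟩
        invFun := fun a => ⟨a.1, a.1.2, by rw [Subgroup.orderOf_coe]; exact a.2⟩
        left_inv := fun x => rfl
        right_inv := fun a => rfl }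
    have h2 : (gens P).card
        = Fintype.card {g : G // g ∈ (P : Subgroup G) ∧ orderOf g = n} :=
      (Fintype.card_subtype _).symm
    rw [h2, Fintype.card_congr e, ← h1, Fintype.card_subtype]
  -- elements of gens P and of Q satisfy g^n = 1
  have hgenssub : ∀ P : Sylow q G, gens P ⊆ T := by
    intro P g hg
    simp only [gens, Finset.mem_filter, Finset.mem_univ, true_and] at hg
    simp only [T, Finset.mem_filter, Finset.mem_univ, true_and]
    rw [← hg.2]; exact pow_orderOf_eq_one g
  have hQFsub : QF ⊆ T := by
    intro g hg
    simp only [QF, Finset.mem_filter, Finset.mem_univ, true_and] at hg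
    simp only [T, Finset.mem_filter, Finset.mem_univ, true_and]
    have : orderOf g ∣ n := by rw [← hcard Q]; exact Subgroup.orderOf_dvd_natCard _ hg
    exact orderOf_dvd_iff_pow_eq_one.mp this
  -- the big union
  let S : Finset G := (Finset.univ.erase Q).biUnion gens
  have hScard : S.card = (t - 1) * Nat.totient n := by
    have hdisj : ∀ P ∈ Finset.univ.erase Q, ∀ P' ∈ Finset.univ.erase Q,
        P ≠ P' → Disjoint (gens P) (gens P') := by
      intro P _ P' _ hne
      rw [Finset.disjoint_left]
      intro g hg hg'
      simp only [gens, Finset.mem_filter, Finset.mem_univ, true_and] at hg hg'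
      exact hne (huniq P P' g hg.1 hg'.1 hg.2)
    rw [Finset.card_biUnion hdisj]
    rw [Finset.sum_congr rfl (fun P _ => hgenscard P), Finset.sum_const, smul_eq_mul]
    congr 1
    rw [Finset.card_erase_of_mem (Finset.mem_univ Q), ht, Nat.card_eq_fintype_card,
      Finset.card_univ]
  have hQS : Disjoint QF S := by
    rw [Finset.disjoint_left]
    intro g hg hg'
    simp only [QF, Finset.mem_filter, Finset.mem_univ, true_and] at hg
    simp only [S, Finset.mem_biUnion] at hg'
    obtain ⟨P, hP, hgP⟩ := hg'
    simp only [gens, Finset.mem_filter, Finset.mem_univ, true_and] at hgP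
    exact (Finset.mem_erase.mp hP).1 (huniq P Q g hgP.1 hg hgP.2)
  -- combine
  have hsub : QF ∪ S ⊆ T := Finset.union_subset hQFsub
    (Finset.biUnion_subset.mpr (fun P _ => hgenssub P))
  have hTcard : Nat.card {g : G | g ^ n = 1} = T.card := by
    rw [Nat.card_eq_fintype_card]
    simp only [T]
    rw [Fintype.card_subtype]
    rfl
  rw [hTcard]
  have htot : Nat.totient n = q ^ m - q ^ (m - 1) := by
    rw [hn, Nat.totient_prime_pow hq (by omega)]
    have h3 : q ^ m = q ^ (m - 1) * q := by
      rw [← pow_succ]; congr 1; omega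
    rw [h3, show q - 1 = Nat.pred q from rfl, Nat.mul_pred]
  calc q ^ m + (t - 1) * (q ^ m - q ^ (m - 1))
      = QF.card + S.card := by rw [hQFcard, hScard, htot]
    _ = (QF ∪ S).card := (Finset.card_union_of_disjoint hQS).symm
    _ ≤ T.card := Finset.card_le_card hsub
end

section
/- Let q > 2 be a prime, m ≥ 3, and G = ⟨a, b | a^(q^(m-1)) = b^q = 1, b⁻¹ab = a^(1+q^(m-2))⟩, the modular group of order q^m. Then for every 1 ≤ s ≤ m-2, the number of elements g in G with g^(q^s) = 1 equals q^(s+1). -/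
lemma aux_shift {G : Type*} [Group G] (x y z : G) (hzy : Commute z y)
    (h : y * x = x * y * z) : ∀ n : ℕ, y ^ n * x = x * y ^ n * z ^ n := by
  intro n
  induction n with
  | zero => simp
  | succ n ih =>
    calc y ^ (n+1) * x = y * (y ^ n * x) := by rw [pow_succ']; group
    _ = y * (x * y ^ n * z ^ n) := by rw [ih]
    _ = (y * x) * y ^ n * z ^ n := by group
    _ = (x * y * z) * y ^ n * z ^ n := by rw [h]
    _ = x * y * (z * y ^ n) * z ^ n := by group
    _ = x * y * (y ^ n * z) * z ^ n := by rw [(hzy.pow_right n).eq]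
    _ = x * y ^ (n+1) * z ^ (n+1) := by rw [pow_succ, pow_succ']; group

lemma aux_pow {G : Type*} [Group G] (x y z : G) (hzx : Commute z x) (hzy : Commute z y)
    (h : y * x = x * y * z) : ∀ n : ℕ, (x * y) ^ n = x ^ n * y ^ n * z ^ (n.choose 2) := by
  intro n
  induction n with
  | zero => simp
  | succ n ih =>
    have hc : (n+1).choose 2 = n.choose 2 + n := by
      rw [Nat.choose_succ_succ]
      simp [Nat.choose_one_right, Nat.add_comm]
    calc (x * y) ^ (n+1) = (x * y) ^ n * (x * y) := pow_succ _ _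
    _ = x ^ n * y ^ n * z ^ n.choose 2 * (x * y) := by rw [ih]
    _ = x ^ n * (y ^ n * (z ^ n.choose 2 * x)) * y := by group
    _ = x ^ n * (y ^ n * (x * z ^ n.choose 2)) * y := by rw [(hzx.pow_left _).eq]
    _ = x ^ n * (y ^ n * x) * (z ^ n.choose 2 * y) := by group
    _ = x ^ n * (x * y ^ n * z ^ n) * (y * z ^ n.choose 2) := by
        rw [aux_shift x y z hzy h n, (hzy.pow_left _).eq]
    _ = x ^ (n+1) * y ^ n * ((z ^ n * y) * z ^ n.choose 2) := by rw [pow_succ]; group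
    _ = x ^ (n+1) * y ^ n * ((y * z ^ n) * z ^ n.choose 2) := by rw [(hzy.pow_left _).eq]
    _ = x ^ (n+1) * y ^ (n+1) * z ^ (n.choose 2 + n) := by rw [pow_succ, pow_add]; group
    _ = x ^ (n+1) * y ^ (n+1) * z ^ ((n+1).choose 2) := by rw [hc]

theorem stmt_3 (q : ℕ) (hq : q.Prime) (hq2 : 2 < q) (m : ℕ) (hm : 3 ≤ m)
    (G : Type*) [Group G] [Finite G] (a b : G)
    (hcard : Nat.card G = q ^ m)
    (ha : orderOf a = q ^ (m - 1)) (hb : orderOf b = q)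
    (hrel : b⁻¹ * a * b = a ^ (1 + q ^ (m - 2)))
    (hgen : Subgroup.closure {a, b} = ⊤) :
    ∀ s : ℕ, 1 ≤ s → s ≤ m - 2 →
      Nat.card {g : G | g ^ (q ^ s) = 1} = q ^ (s + 1) := by
  have hq0 : 0 < q := hq.pos
  set t := q ^ (m - 2) with ht
  set c := a ^ t with hc
  -- order of c is q
  have hc_ord : orderOf c = q := by
    rw [hc, orderOf_pow, ha, ht, Nat.gcd_eq_right (pow_dvd_pow q (by omega)),
      Nat.pow_div (by omega) hq0, show m - 1 - (m - 2) = 1 by omega, pow_one]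
  have hcq : c ^ q = 1 := by rw [← hc_ord]; exact pow_orderOf_eq_one c
  -- c commutes with b
  have hcb : Commute c b := by
    have h1 : (b⁻¹ * a * b) ^ t = b⁻¹ * c * b := by
      rw [hc, show b⁻¹ * a * b = b⁻¹ * a * b⁻¹⁻¹ by rw [inv_inv], conj_pow, inv_inv]
    have h2 : a ^ (t * t) = 1 := by
      apply orderOf_dvd_iff_pow_eq_one.mp
      rw [ha, ht, ← pow_add]
      exact pow_dvd_pow q (by omega)
    have h3 : b⁻¹ * c * b = c := by
      rw [← h1, hrel, ← pow_mul, add_mul, one_mul, pow_add, h2, mul_one]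
    have h4 := congrArg (fun g => b * g) h3
    simp only [← mul_assoc, mul_inv_cancel, one_mul] at h4
    exact h4
  -- c is central
  have hc_cent : ∀ g : G, Commute c g := by
    intro g
    have hsub : Subgroup.closure {a, b} ≤ Subgroup.centralizer {c} := by
      rw [Subgroup.closure_le]
      intro x hx
      rw [SetLike.mem_coe, Subgroup.mem_centralizer_iff]
      intro h hh
      rw [Set.mem_singleton_iff] at hh
      rw [hh]
      simp only [Set.mem_insert_iff, Set.mem_singleton_iff] at hx
      rcases hx with hx | hx <;> rw [hx]
      · exact ((Commute.refl a).pow_left t).eq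
      · exact hcb.eq
    have hg : g ∈ Subgroup.centralizer {c} := hsub (hgen ▸ Subgroup.mem_top g)
    exact Subgroup.mem_centralizer_iff.mp hg c (Set.mem_singleton c)
  -- the commutator of a and b is c
  have hab : a * b * a⁻¹ * b⁻¹ = c := by
    have h1 : a * b = b * a ^ (1 + t) := by
      have := congrArg (fun g => b * g) hrel
      simpa [← mul_assoc] using this
    have h4 : a ^ (1 + t) * a⁻¹ = c := by
      rw [add_comm, pow_add, pow_one, mul_inv_cancel_right, hc]
    rw [h1, mul_assoc b, h4, ← hcb.eq, mul_inv_cancel_right]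
  set Z := Subgroup.zpowers c with hZ
  have hZnormal : Z.Normal := by
    constructor
    intro z hz g
    obtain ⟨k, hk⟩ := Subgroup.mem_zpowers_iff.mp hz
    have hcz : Commute z g := hk ▸ (hc_cent g).zpow_left k
    rw [← hcz.eq]
    simpa using hz
  -- all commutators lie in Z
  have hZcomm : ∀ x y : G, y⁻¹ * x⁻¹ * y * x ∈ Z := by
    intro x y
    let π : G →* G ⧸ Z := QuotientGroup.mk' Z
    have hπc : π c = 1 := (QuotientGroup.eq_one_iff c).mpr (Subgroup.mem_zpowers c)
    have hπab : Commute (π a) (π b) := by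
      apply commutatorElement_eq_one_iff_commute.mp
      rw [commutatorElement_def, ← map_inv, ← map_inv, ← map_mul, ← map_mul, ← map_mul, hab]
      exact hπc
    have htop : Subgroup.closure {π a, π b} = (⊤ : Subgroup (G ⧸ Z)) := by
      have h := MonoidHom.map_closure π {a, b}
      rw [hgen, Subgroup.map_top_of_surjective π (QuotientGroup.mk'_surjective Z)] at h
      rw [h, Set.image_pair]
    have hcomm_pair : ∀ u ∈ ({π a, π b} : Set (G ⧸ Z)), ∀ v ∈ ({π a, π b} : Set (G ⧸ Z)),
        u * v = v * u := by
      intro u hu v hv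
      simp only [Set.mem_insert_iff, Set.mem_singleton_iff] at hu hv
      rcases hu with hu | hu <;> rcases hv with hv | hv <;> rw [hu, hv]
      · exact hπab.eq
      · exact hπab.eq.symm
    have hcentral : Subgroup.centralizer {π a, π b} = ⊤ := by
      rw [eq_top_iff, ← htop, Subgroup.closure_le]
      intro x hx
      rw [SetLike.mem_coe, Subgroup.mem_centralizer_iff]
      intro h hh
      exact hcomm_pair h hh x hx
    have hcenter : ({π a, π b} : Set (G ⧸ Z)) ⊆ Subgroup.center (G ⧸ Z) :=
      Subgroup.centralizer_eq_top_iff_subset.mp hcentral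
    have hcent_top : Subgroup.center (G ⧸ Z) = ⊤ := by
      rw [eq_top_iff, ← htop, Subgroup.closure_le]; exact hcenter
    have hcomm : ∀ u v : G ⧸ Z, u * v = v * u := by
      intro u v
      exact Subgroup.mem_center_iff.mp (hcent_top ▸ Subgroup.mem_top v) u
    rw [← QuotientGroup.eq_one_iff]
    show π (y⁻¹ * x⁻¹ * y * x) = 1
    simp only [map_mul, map_inv]
    rw [show (π y)⁻¹ * (π x)⁻¹ * π y * π x = (π x * π y)⁻¹ * (π y * π x) by group,
      hcomm (π x) (π y), inv_mul_cancel]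
  intro s hs1 hs2
  set n := q ^ s with hn
  have hqn : q ∣ n := dvd_pow_self q (by omega)
  have hqC : q ∣ n.choose 2 := by
    have hodd : Odd n := (hq.odd_of_ne_two (by omega)).pow
    have h2 : 2 ∣ n - 1 := (Nat.Odd.sub_odd hodd odd_one).two_dvd
    rw [Nat.choose_two_right, Nat.mul_div_assoc n h2]
    exact hqn.mul_right _
  have hmap : ∀ x y : G, (x * y) ^ n = x ^ n * y ^ n := by
    intro x y
    set z := y⁻¹ * x⁻¹ * y * x with hz
    have hzZ : z ∈ Z := hZcomm x y
    obtain ⟨k, hk⟩ := Subgroup.mem_zpowers_iff.mp hzZ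
    have hzx : Commute z x := hk ▸ (hc_cent x).zpow_left k
    have hzy : Commute z y := hk ▸ (hc_cent y).zpow_left k
    have hrel2 : y * x = x * y * z := by rw [hz]; group
    have hzC : z ^ n.choose 2 = 1 := by
      apply orderOf_dvd_iff_pow_eq_one.mp
      exact ((orderOf_dvd_of_mem_zpowers hzZ).trans (hc_ord ▸ dvd_refl (orderOf c))).trans hqC
    rw [aux_pow x y z hzx hzy hrel2 n, hzC, mul_one]
  let φ : G →* G := { toFun := fun g => g ^ n, map_one' := one_pow n, map_mul' := hmap }
  have hbn : φ b = 1 := by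
    show b ^ n = 1
    exact orderOf_dvd_iff_pow_eq_one.mp (hb ▸ hqn)
  have hrange : φ.range = Subgroup.zpowers (a ^ n) := by
    rw [MonoidHom.range_eq_map, ← hgen, MonoidHom.map_closure, Set.image_pair,
      show φ a = a ^ n from rfl, hbn, Set.insert_eq, Subgroup.closure_union,
      Subgroup.closure_singleton_one, sup_bot_eq, Subgroup.zpowers_eq_closure]
  have hordan : orderOf (a ^ n) = q ^ (m - 1 - s) := by
    rw [orderOf_pow, ha, hn, Nat.gcd_eq_right (pow_dvd_pow q (by omega)),
      Nat.pow_div (by omega) hq0]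
  have hcard_range : Nat.card φ.range = q ^ (m - 1 - s) := by
    rw [hrange, Nat.card_zpowers, hordan]
  have hker : Nat.card G = Nat.card (G ⧸ φ.ker) * Nat.card φ.ker :=
    Subgroup.card_eq_card_quotient_mul_card_subgroup φ.ker
  have hquot : Nat.card (G ⧸ φ.ker) = Nat.card φ.range :=
    Nat.card_congr (QuotientGroup.quotientKerEquivRange φ).toEquiv
  have heq : q ^ (m - 1 - s) * q ^ (s + 1) = q ^ (m - 1 - s) * Nat.card φ.ker := by
    rw [← pow_add, show m - 1 - s + (s + 1) = m by omega, ← hcard, hker, hquot, hcard_range]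
  have hkcard : Nat.card φ.ker = q ^ (s + 1) :=
    (Nat.eq_of_mul_eq_mul_left (pow_pos hq0 _) heq).symm
  have hsetker : {g : G | g ^ n = 1} = (φ.ker : Set G) := by
    ext g
    rw [Set.mem_setOf_eq, SetLike.mem_coe, MonoidHom.mem_ker]
    rfl
  rw [hsetker]
  exact hkcard
end

section
/- Let m ≥ 4 and G = ⟨a, b | a^(2^(m-1)) = b² = 1, b⁻¹ab = a^(1+2^(m-2))⟩. Then for every 1 ≤ s ≤ m-1, the number of elements g in G with g^(2^s) = 1 is at most 2 · 2^s. -/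
/-!
Every element of `G` is `x` or `x * b` with `x ∈ ⟨a⟩`. Since `⟨a⟩` is cyclic, at most `2 ^ s` of
the `x` satisfy `x ^ 2 ^ s = 1`. On the other coset, `(x * b) ^ 2 = x ^ (2 + 2 ^ (m - 2))`, so
`(x * b) ^ 2 ^ s = (x ^ 2 ^ s) ^ (1 + 2 ^ (m - 3))`; the exponent being odd and `⟨a⟩` a `2`-group,
`(x * b) ^ 2 ^ s = 1` forces `x ^ 2 ^ s = 1`. So the coset contributes at most `2 ^ s` more.
-/

open Subgroup

section ModularTwoGroup

variable {G : Type*} [Group G] {a b : G} {k : ℕ}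

theorem inv_mul_mul_eq_pow_of_mem_zpowers (hrel : b⁻¹ * a * b = a ^ k) {x : G}
    (hx : x ∈ zpowers a) : b⁻¹ * x * b = x ^ k := by
  obtain ⟨n, rfl⟩ := hx
  calc b⁻¹ * a ^ n * b = (b⁻¹ * a * b) ^ n := by simpa using (conj_zpow (a := b⁻¹)).symm
    _ = (a ^ n) ^ k := by rw [hrel, ← zpow_natCast, ← zpow_mul, mul_comm, zpow_mul, zpow_natCast]

theorem mem_zpowers_or_mul_mem_zpowers_of_mem_closure (hb : b ^ 2 = 1)
    (hrel : b⁻¹ * a * b = a ^ k) {g : G} (hg : g ∈ closure {a, b}) :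
    g ∈ zpowers a ∨ g * b ∈ zpowers a := by
  have hconj (x : G) (hx : x ∈ zpowers a) : b⁻¹ * x * b ∈ zpowers a := by
    rw [inv_mul_mul_eq_pow_of_mem_zpowers hrel hx]
    exact pow_mem hx k
  have hbb : b * b ∈ zpowers a := by rw [← sq, hb]; exact one_mem _
  induction hg using closure_induction with
  | mem x hx =>
    rcases hx with rfl | rfl
    · exact .inl (mem_zpowers x)
    · exact .inr hbb
  | one => exact .inl (one_mem _)
  | mul x y _ _ hx hy =>
    rcases hx with hx | hx <;> rcases hy with hy | hy
    · exact .inl (mul_mem hx hy)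
    · exact .inr (by rw [mul_assoc]; exact mul_mem hx hy)
    · refine .inr ?_
      rw [show x * y * b = x * b * (b⁻¹ * y * b) by group]
      exact mul_mem hx (hconj y hy)
    · refine .inl ?_
      rw [show x * y = x * b * (b⁻¹ * (y * b) * b) * (b * b)⁻¹ by group]
      exact mul_mem (mul_mem hx (hconj _ hy)) (inv_mem hbb)
  | inv x _ hx =>
    rcases hx with hx | hx
    · exact .inl (inv_mem hx)
    · refine .inr ?_
      rw [show x⁻¹ * b = b * b * (b⁻¹ * (x * b)⁻¹ * b) by group]
      exact mul_mem hbb (hconj _ (inv_mem hx))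

theorem mul_sq_eq_pow_of_mem_zpowers (hb : b ^ 2 = 1) (hrel : b⁻¹ * a * b = a ^ k) {x : G}
    (hx : x ∈ zpowers a) : (x * b) ^ 2 = x ^ (k + 1) := by
  have hbinv : b⁻¹ = b := inv_eq_of_mul_eq_one_right (by rw [← sq, hb])
  calc (x * b) ^ 2 = x * (b⁻¹ * x * b) := by simp only [sq, hbinv, mul_assoc]
    _ = x ^ (k + 1) := by rw [inv_mul_mul_eq_pow_of_mem_zpowers hrel hx, pow_succ']

theorem pow_two_pow_eq_one_of_mul_pow_two_pow_eq_one {n s : ℕ} (ha : a ^ 2 ^ n = 1)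
    (hb : b ^ 2 = 1) (hrel : b⁻¹ * a * b = a ^ k) (hk : k % 4 = 1) (hs : 1 ≤ s) {x : G}
    (hx : x ∈ zpowers a) (hxb : (x * b) ^ 2 ^ s = 1) : x ^ 2 ^ s = 1 := by
  obtain ⟨u, hku⟩ : ∃ u, k + 1 = 2 * (2 * u + 1) := ⟨k / 4, by omega⟩
  obtain ⟨t, rfl⟩ : ∃ t, s = t + 1 := ⟨s - 1, by omega⟩
  have hodd : (x ^ 2 ^ (t + 1)) ^ (2 * u + 1) = 1 :=
    calc (x ^ 2 ^ (t + 1)) ^ (2 * u + 1) = (x ^ (k + 1)) ^ 2 ^ t := by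
          rw [hku, ← pow_mul, ← pow_mul]; ring_nf
      _ = (x * b) ^ 2 ^ (t + 1) := by
          rw [← mul_sq_eq_pow_of_mem_zpowers hb hrel hx, ← pow_mul, pow_succ']
      _ = 1 := hxb
  have htwo : (x ^ 2 ^ (t + 1)) ^ 2 ^ n = 1 :=
    orderOf_dvd_iff_pow_eq_one.mp <| (orderOf_dvd_of_mem_zpowers (pow_mem hx _)).trans
      (orderOf_dvd_of_pow_eq_one ha)
  have hcop : (2 ^ n).Coprime (2 * u + 1) :=
    (Nat.coprime_two_left.mpr (odd_two_mul_add_one u)).pow_left n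
  exact (pow_eq_one_iff_of_coprime hcop).mp ⟨htwo, hodd⟩

theorem ncard_mem_zpowers_pow_eq_one_le [Finite G] (a : G) {n : ℕ}
    (hn : 0 < n) : {x | x ∈ zpowers a ∧ x ^ n = 1}.ncard ≤ n := by
  classical
  have := Fintype.ofFinite (zpowers a)
  have himage : {x | x ∈ zpowers a ∧ x ^ n = 1} =
      Subtype.val '' (↑(Finset.univ.filter fun y : zpowers a => y ^ n = 1) : Set (zpowers a)) := by
    ext x
    constructor
    · rintro ⟨hx, hxn⟩
      exact ⟨⟨x, hx⟩, by simpa [Subtype.ext_iff] using hxn, rfl⟩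
    · rintro ⟨y, hy, rfl⟩
      exact ⟨y.2, by simpa [Subtype.ext_iff] using hy⟩
  rw [himage, Set.ncard_image_of_injective _ Subtype.val_injective, Set.ncard_coe_finset]
  exact IsCyclic.card_pow_eq_one_le hn

end ModularTwoGroup

theorem stmt_8_general (m : ℕ) (hm : 4 ≤ m) (G : Type*) [Group G] [Finite G] (a b : G)
    (ha : orderOf a = 2 ^ (m - 1)) (hb : orderOf b = 2)
    (hrel : b⁻¹ * a * b = a ^ (1 + 2 ^ (m - 2)))
    (hgen : Subgroup.closure {a, b} = ⊤) :
    ∀ s : ℕ, 1 ≤ s → s ≤ m - 1 →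
      Nat.card {g : G | g ^ (2 ^ s) = 1} ≤ 2 * 2 ^ s := by
  intro s hs _
  have ha' : a ^ 2 ^ (m - 1) = 1 := ha ▸ pow_orderOf_eq_one a
  have hb' : b ^ 2 = 1 := hb ▸ pow_orderOf_eq_one b
  have hk : (1 + 2 ^ (m - 2)) % 4 = 1 := by
    rw [show m - 2 = m - 4 + 2 by omega, pow_add]
    norm_num
  set T := {x | x ∈ zpowers a ∧ x ^ 2 ^ s = 1}
  have hcover : {g : G | g ^ 2 ^ s = 1} ⊆ T ∪ (· * b) '' T := by
    intro g hg
    have hgbb : g * b * b = g := by rw [mul_assoc, ← sq, hb', mul_one]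
    rcases mem_zpowers_or_mul_mem_zpowers_of_mem_closure hb' hrel (hgen ▸ mem_top g) with h | h
    · exact .inl ⟨h, hg⟩
    · refine .inr ⟨g * b, ⟨h, ?_⟩, hgbb⟩
      exact pow_two_pow_eq_one_of_mul_pow_two_pow_eq_one ha' hb' hrel hk hs h (by rwa [hgbb])
  rw [Nat.card_coe_set_eq]
  calc {g : G | g ^ 2 ^ s = 1}.ncard
      ≤ (T ∪ (· * b) '' T).ncard := Set.ncard_le_ncard hcover
    _ ≤ T.ncard + ((· * b) '' T).ncard := Set.ncard_union_le _ _
    _ = T.ncard + T.ncard := by rw [Set.ncard_image_of_injective _ (mul_left_injective b)]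
    _ ≤ 2 * 2 ^ s := by
        rw [← two_mul]
        exact Nat.mul_le_mul_left 2 (ncard_mem_zpowers_pow_eq_one_le a (by positivity))

theorem stmt_8 (m : ℕ) (hm : 4 ≤ m) (G : Type*) [Group G] [Finite G] (a b : G)
    (hcard : Nat.card G = 2 ^ m)
    (ha : orderOf a = 2 ^ (m - 1)) (hb : orderOf b = 2)
    (hrel : b⁻¹ * a * b = a ^ (1 + 2 ^ (m - 2)))
    (hgen : Subgroup.closure {a, b} = ⊤) :
    ∀ s : ℕ, 1 ≤ s → s ≤ m - 1 →
      Nat.card {g : G | g ^ (2 ^ s) = 1} ≤ 2 * 2 ^ s :=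
  stmt_8_general m hm G a b ha hb hrel hgen
end

section
/- Let G be a finite group, q the smallest prime divisor of |G|, and suppose that for every prime-power divisor n of the exponent of G, the number of elements g with g^n = 1 is at most q·n. Then for every prime p ≠ q dividing |G|, the Sylow p-subgroups of G are cyclic. -/
theorem stmt_11 (G : Type*) [Group G] [Finite G] (q : ℕ) (hq : q.Prime)
    (hqdvd : q ∣ Nat.card G)
    (hqmin : ∀ p : ℕ, p.Prime → p ∣ Nat.card G → q ≤ p)
    (hF : ∀ n : ℕ, IsPrimePow n → n ∣ Monoid.exponent G →
      Nat.card {g : G | g ^ n = 1} ≤ q * n) :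
    ∀ p : ℕ, p.Prime → p ≠ q → p ∣ Nat.card G → ∀ P : Sylow p G, IsCyclic P := by
  intro p hp hpq hpdvd P
  have hfp : Fact p.Prime := ⟨hp⟩
  by_cases hP1 : Nat.card P = 1
  · exact @isCyclic_of_subsingleton _ _ (Nat.card_eq_one_iff_unique.mp hP1).1
  obtain ⟨k, hk⟩ := P.isPGroup'.exists_card_eq
  have hexp_dvd : Monoid.exponent P ∣ p ^ k :=
    hk ▸ Group.exponent_dvd_nat_card
  obtain ⟨m, hmk, hnm⟩ := (Nat.dvd_prime_pow hp).mp hexp_dvd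
  set n := Monoid.exponent P with hn
  -- m ≥ 1
  have hm1 : 1 ≤ m := by
    rcases Nat.eq_zero_or_pos m with h0 | h
    · exfalso
      apply hP1
      have : Monoid.exponent P = 1 := by
        rw [← hn, hnm, h0, pow_zero]
      have hsub : Subsingleton P := Monoid.exp_eq_one_iff.mp this
      exact Nat.card_eq_one_iff_unique.mpr ⟨⟨fun a b => Subsingleton.elim a b⟩, ⟨1⟩⟩
    · exact h
  -- exponent P divides exponent G
  have hdvdG : n ∣ Monoid.exponent G :=
    Monoid.exponent_dvd_of_monoidHom P.1.subtype P.1.subtype_injective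
  -- card P ≤ Nat.card {g : G | g ^ n = 1}
  have hcard_le : Nat.card P ≤ Nat.card {g : G | g ^ n = 1} := by
    apply Nat.card_le_card_of_injective
      (f := fun x : P => (⟨(x : G), by
        show (x : G) ^ n = 1
        have : (x ^ n : P) = 1 := Monoid.pow_exponent_eq_one x
        simpa using congrArg P.1.subtype this⟩ : {g : G | g ^ n = 1}))
    intro a b hab
    simp only [Subtype.mk.injEq] at hab
    exact Subtype.ext hab
  -- get cyclic if m = k
  rcases eq_or_lt_of_le hmk with heq | hlt
  · obtain ⟨g, hg⟩ := hp.exists_orderOf_eq_pow_factorization_exponent P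
    refine isCyclic_of_orderOf_eq_card g ?_
    rw [hg, hk, ← heq]
    congr 1
    rw [← hn, hnm, Nat.Prime.factorization_pow hp, Finsupp.single_eq_same]
  · exfalso
    have hq_lt_p : q < p := lt_of_le_of_ne (hqmin p hp hpdvd) (Ne.symm hpq)
    have hbound := hF n ⟨p, m, hp.prime, hm1, hnm.symm⟩ hdvdG
    have h1 : p ^ (m + 1) ≤ Nat.card P := by
      rw [hk]; exact Nat.pow_le_pow_right hp.pos hlt
    have h2 : q * n < p ^ (m + 1) := by
      rw [hnm, pow_succ']
      exact Nat.mul_lt_mul_of_pos_right hq_lt_p (pow_pos hp.pos m)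
    omega
end

section
/- Let G be a finite group, q the smallest prime divisor of |G|, and suppose that for every prime-power divisor n of the exponent of G, the number of elements g with g^n = 1 is at most q·n. Then for every prime p ≠ q dividing |G|, the Sylow p-subgroup of G is normal in G. -/
/-!
Let `p ^ b` be the `p`-part of `exp G` and `S = {g | g ^ p ^ b = 1}`; it contains every
`p`-element. As `|S| ≤ q p ^ b < p ^ (b + 1)`, a Sylow `p`-subgroup has order exactly `p ^ b`,
hence is cyclic, since `G` has an element of order `p ^ b`. A generator determines its Sylow
subgroup, so `n_p φ(p ^ b) ≤ |S| ≤ q p ^ b`, which gives `n_p ≤ p`; with `n_p ≡ 1 [MOD p]`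
this forces `n_p = 1`.
-/

open Nat

theorem Nat.eq_one_of_modEq_one_of_mul_totient_le {n p q b : ℕ} (hp : p.Prime)
    (hn : n ≡ 1 [MOD p]) (hqp : q < p) (h : n * φ (p ^ b) ≤ q * p ^ b) : n = 1 := by
  have hnp : n ≤ p := by
    rcases b with _ | b
    · simp only [pow_zero, totient_one, mul_one] at h
      omega
    · rw [totient_prime_pow_succ hp, pow_succ] at h
      have hpb : 0 < p ^ b := pow_pos hp.pos b
      have : n * (p - 1) * p ^ b ≤ p * (p - 1) * p ^ b := by
        calc n * (p - 1) * p ^ b = n * (p ^ b * (p - 1)) := by ring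
          _ ≤ q * (p ^ b * p) := h
          _ ≤ (p - 1) * (p ^ b * p) := by gcongr; omega
          _ = p * (p - 1) * p ^ b := by ring
      have hp1 : 0 < p - 1 := Nat.sub_pos_of_lt hp.one_lt
      exact Nat.le_of_mul_le_mul_right (Nat.le_of_mul_le_mul_right this hpb) hp1
  have h1 : 1 % p = 1 := Nat.mod_eq_of_lt hp.one_lt
  unfold Nat.ModEq at hn
  rcases hnp.lt_or_eq with hlt | rfl
  · rw [Nat.mod_eq_of_lt hlt] at hn; omega
  · rw [Nat.mod_self] at hn; omega

section
variable {G : Type*} [Group G] [Finite G] {p : ℕ}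

theorem Sylow.zpowers_eq_of_orderOf_eq_card (P : Sylow p G) {x : G} (hx : x ∈ P)
    (h : orderOf x = Nat.card P) : Subgroup.zpowers x = P :=
  Subgroup.eq_of_le_of_card_ge ((Subgroup.zpowers_le).mpr hx) (by rw [Nat.card_zpowers, h])

variable [hp : Fact p.Prime]

theorem IsPGroup.pow_ordProj_exponent_eq_one {H : Subgroup G} (hH : IsPGroup p H) {x : G}
    (hx : x ∈ H) : x ^ ordProj[p] (Monoid.exponent G) = 1 := by
  obtain ⟨k, hk⟩ := IsPGroup.iff_orderOf.mp hH ⟨x, hx⟩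
  rw [Subgroup.orderOf_mk] at hk
  have := (hp.out.pow_dvd_iff_dvd_ordProj Monoid.exponent_ne_zero_of_finite).mp
    (hk ▸ Monoid.order_dvd_exponent x)
  exact orderOf_dvd_iff_pow_eq_one.mp (hk ▸ this)

theorem Sylow.card_eq_ordProj_exponent_of_card_lt (P : Sylow p G)
    (h : Nat.card {g : G | g ^ ordProj[p] (Monoid.exponent G) = 1} <
      p * ordProj[p] (Monoid.exponent G)) :
    Nat.card P = ordProj[p] (Monoid.exponent G) := by
  have hle : Nat.card P ≤ Nat.card {g : G | g ^ ordProj[p] (Monoid.exponent G) = 1} :=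
    Nat.card_mono (Set.toFinite _) fun x hx => P.isPGroup'.pow_ordProj_exponent_eq_one hx
  have hdvd : ordProj[p] (Monoid.exponent G) ∣ Nat.card P := P.card_eq_multiplicity ▸
    Nat.ordProj_dvd_ordProj_of_dvd Nat.card_pos.ne' Group.exponent_dvd_nat_card p
  rw [P.card_eq_multiplicity] at hle hdvd ⊢
  rw [← pow_succ'] at h
  rw [pow_dvd_pow_iff_le_right hp.out.one_lt] at hdvd
  have := (pow_lt_pow_iff_right₀ hp.out.one_lt).mp (hle.trans_lt h)
  congr 1
  omega

theorem Sylow.isCyclic_of_orderOf_eq_card (P : Sylow p G) {g : G} (hg : orderOf g = Nat.card P)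
    (Q : Sylow p G) : IsCyclic Q := by
  have hpg : IsPGroup p (Subgroup.zpowers g) :=
    IsPGroup.of_card (by rw [Nat.card_zpowers, hg, P.card_eq_multiplicity])
  obtain ⟨R, hR⟩ := hpg.exists_le_sylow
  have hRg : Subgroup.zpowers g = R :=
    R.zpowers_eq_of_orderOf_eq_card (hR (Subgroup.mem_zpowers g))
      (by rw [hg, P.card_eq_multiplicity, R.card_eq_multiplicity])
  have : IsCyclic R := hRg ▸ inferInstance
  exact (R.equiv Q).isCyclic.mp this

theorem Sylow.card_mul_totient_le (hcyc : ∀ R : Sylow p G, IsCyclic R) (P : Sylow p G)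
    {s : Set G} (hs : ∀ R : Sylow p G, (R : Set G) ⊆ s) :
    Nat.card (Sylow p G) * φ (Nat.card P) ≤ Nat.card s := by
  have card_eq_card (R R' : Sylow p G) : Nat.card R = Nat.card R' := by
    rw [R.card_eq_multiplicity, R'.card_eq_multiplicity]
  have hfiber (R : Sylow p G) :
      Nat.card {x : R // orderOf x = Nat.card P} = φ (Nat.card P) := by
    have := Fintype.ofFinite R
    classical
    rw [Nat.card_eq_fintype_card, Fintype.card_subtype]
    exact IsCyclic.card_orderOf_eq_totient
      (by rw [← Nat.card_eq_fintype_card, card_eq_card P R]; exact dvd_rfl)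
  let f : (Σ R : Sylow p G, {x : R // orderOf x = Nat.card P}) → s :=
    fun x => ⟨x.2.1, hs x.1 x.2.1.2⟩
  have hf : Function.Injective f := by
    rintro ⟨R, ⟨x, hxR⟩, hx⟩ ⟨R', ⟨x', hxR'⟩, hx'⟩ hxx'
    obtain rfl : x = x' := congrArg Subtype.val hxx'
    have hcard : orderOf x = Nat.card P := by rwa [Subgroup.orderOf_mk] at hx
    obtain rfl : R = R' := Sylow.ext <|
      (R.zpowers_eq_of_orderOf_eq_card hxR (hcard.trans (card_eq_card P R))).symm.trans
        (R'.zpowers_eq_of_orderOf_eq_card hxR' (hcard.trans (card_eq_card P R')))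
    rfl
  calc Nat.card (Sylow p G) * φ (Nat.card P)
      = Nat.card (Σ R : Sylow p G, {x : R // orderOf x = Nat.card P}) := by
        have := Fintype.ofFinite (Sylow p G)
        rw [Nat.card_sigma, Finset.sum_congr rfl fun R _ => hfiber R, Finset.sum_const,
          Finset.card_univ, smul_eq_mul, Nat.card_eq_fintype_card]
    _ ≤ Nat.card s := Nat.card_le_card_of_injective f hf

end

theorem stmt_12_general (G : Type*) [Group G] [Finite G] (q : ℕ)
    (hqmin : ∀ p : ℕ, p.Prime → p ∣ Nat.card G → q ≤ p)
    (hF : ∀ n : ℕ, IsPrimePow n → n ∣ Monoid.exponent G →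
      Nat.card {g : G | g ^ n = 1} ≤ q * n) :
    ∀ p : ℕ, p.Prime → p ≠ q → p ∣ Nat.card G →
      ∀ P : Sylow p G, (P : Subgroup G).Normal := by
  intro p hp hpq hpdvd P
  have := Fact.mk hp
  have hqp : q < p := (hqmin p hp hpdvd).lt_of_ne hpq.symm
  have hp_exp : p ∣ Monoid.exponent G := by
    obtain ⟨g, hg⟩ := exists_prime_orderOf_dvd_card' p hpdvd
    exact hg ▸ Monoid.order_dvd_exponent g
  have hS := hF _ ⟨p, _, hp.prime,
    (hp.dvd_iff_one_le_factorization Monoid.exponent_ne_zero_of_finite).mp hp_exp, rfl⟩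
    (Nat.ordProj_dvd _ p)
  have hP := P.card_eq_ordProj_exponent_of_card_lt
    (hS.trans_lt (Nat.mul_lt_mul_of_pos_right hqp (Nat.ordProj_pos _ p)))
  obtain ⟨g, hg⟩ := hp.exists_orderOf_eq_pow_factorization_exponent G
  have hcount := Sylow.card_mul_totient_le (P.isCyclic_of_orderOf_eq_card (hg.trans hP.symm)) P
    fun R _ hx => R.isPGroup'.pow_ordProj_exponent_eq_one hx
  rw [hP] at hcount
  have hone := Nat.eq_one_of_modEq_one_of_mul_totient_le hp (card_sylow_modEq_one p G) hqp
    (hcount.trans hS)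
  have := (Nat.card_eq_one_iff_unique.mp hone).1
  exact P.normal_of_subsingleton

theorem stmt_12 (G : Type*) [Group G] [Finite G] (q : ℕ) (hq : q.Prime)
    (hqdvd : q ∣ Nat.card G)
    (hqmin : ∀ p : ℕ, p.Prime → p ∣ Nat.card G → q ≤ p)
    (hF : ∀ n : ℕ, IsPrimePow n → n ∣ Monoid.exponent G →
      Nat.card {g : G | g ^ n = 1} ≤ q * n) :
    ∀ p : ℕ, p.Prime → p ≠ q → p ∣ Nat.card G →
      ∀ P : Sylow p G, (P : Subgroup G).Normal :=
  stmt_12_general G q hqmin hF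
end

section
/- Let G be a finite group, q the smallest prime divisor of |G|, Q a Sylow q-subgroup of G with |Q| = q^m, and suppose that for every prime-power divisor n of exp(G), the number of elements g with g^n = 1 is at most q·n. Then exp(Q) equals q^m or q^(m-1). -/
theorem stmt_13 (G : Type*) [Group G] [Finite G] (q : ℕ) (hq : q.Prime)
    (hqdvd : q ∣ Nat.card G)
    (hqmin : ∀ p : ℕ, p.Prime → p ∣ Nat.card G → q ≤ p)
    (Q : Sylow q G) (m : ℕ) (hQcard : Nat.card Q = q ^ m)
    (hF : ∀ n : ℕ, IsPrimePow n → n ∣ Monoid.exponent G →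
      Nat.card {g : G | g ^ n = 1} ≤ q * n) :
    Monoid.exponent Q = q ^ m ∨ Monoid.exponent Q = q ^ (m - 1) := by
  -- exponent divides card
  have hexp_dvd : Monoid.exponent Q ∣ q ^ m := by
    rw [← hQcard]; exact Group.exponent_dvd_nat_card
  obtain ⟨e, he_le, he⟩ := (Nat.dvd_prime_pow hq).mp hexp_dvd
  rcases Nat.eq_or_lt_of_le he_le with heq | hlt
  · left; rw [he, heq]
  -- e < m; show e ≥ m - 1
  rcases Nat.eq_zero_or_pos e with he0 | hepos
  · -- exponent = 1, so Q trivial, m = 0 — contradiction with e < m unless m = 0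
    have hQtriv : Nat.card Q = 1 := by
      have : Monoid.exponent Q = 1 := by rw [he, he0, pow_zero]
      have hall : ∀ g : (Q : Subgroup G), g = 1 := fun g => by
        have h1 := Monoid.pow_exponent_eq_one g
        rwa [this, pow_one] at h1
      exact Nat.card_eq_one_iff_unique.mpr
        ⟨⟨fun a b => by rw [hall a, hall b]⟩, ⟨1⟩⟩
    have : m = 0 := by
      rw [hQtriv] at hQcard
      by_contra hm
      have := Nat.one_lt_pow hm hq.one_lt
      omega
    omega
  · -- 1 ≤ e < m. Apply hF with n = q^e.
    have hpp : IsPrimePow (q ^ e) := ⟨q, e, hq.prime, hepos, rfl⟩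
    have hdvd : q ^ e ∣ Monoid.exponent G := by
      rw [← he]
      exact Monoid.exponent_dvd_of_monoidHom (Q : Subgroup G).subtype
        (Q : Subgroup G).subtype_injective
    have hle := hF (q ^ e) hpp hdvd
    -- Q injects into the set {g : G | g ^ q^e = 1}
    have hsub : ((Q : Subgroup G) : Set G) ⊆ {g : G | g ^ (q ^ e) = 1} := by
      intro g hg
      have := Subgroup.pow_exponent_eq_one hg
      rw [he] at this
      exact this
    have hcard_le : Nat.card Q ≤ Nat.card {g : G | g ^ (q ^ e) = 1} :=
      Nat.card_mono (Set.toFinite _) hsub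
    rw [hQcard] at hcard_le
    have : q ^ m ≤ q ^ (e + 1) := by
      calc q ^ m ≤ q * q ^ e := le_trans hcard_le hle
        _ = q ^ (e + 1) := by ring
    have hme : m ≤ e + 1 := (Nat.pow_le_pow_iff_right hq.one_lt).mp this
    right
    rw [he]
    congr 1
    omega
end

section
/- Let G be a finite group, q the smallest prime divisor of |G|, Q a Sylow q-subgroup of G that is cyclic and not normal in G, and suppose that for every prime-power divisor n of exp(G), the number of elements g with g^n = 1 is at most q·n. Then q = 2 and G has exactly 3 Sylow 2-subgroups. -/
open Finset Subgroup

private lemma aux_eq_of_le_of_card_le {G : Type*} [Group G] [Finite G] {H K : Subgroup G}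
    (h : H ≤ K) (hc : Nat.card K ≤ Nat.card H) : H = K := by
  have h1 : Nat.card (H.subgroupOf K) = Nat.card H :=
    Nat.card_congr (Subgroup.subgroupOfEquivOfLe h).toEquiv
  have h2 : H.subgroupOf K = ⊤ :=
    Subgroup.eq_top_of_card_eq _ (by rw [h1]; exact le_antisymm (Subgroup.card_le_of_le h) hc)
  exact le_antisymm h (Subgroup.subgroupOf_eq_top.mp h2)

theorem stmt_14 (G : Type*) [Group G] [Finite G] (q : ℕ) (hq : q.Prime)
    (hqdvd : q ∣ Nat.card G)
    (hqmin : ∀ p : ℕ, p.Prime → p ∣ Nat.card G → q ≤ p)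
    (Q : Sylow q G) (hQcyc : IsCyclic Q) (hQnn : ¬ (Q : Subgroup G).Normal)
    (hF : ∀ n : ℕ, IsPrimePow n → n ∣ Monoid.exponent G →
      Nat.card {g : G | g ^ n = 1} ≤ q * n) :
    q = 2 ∧ Nat.card (Sylow q G) = 3 := by
  classical
  haveI : Fact q.Prime := ⟨hq⟩
  cases nonempty_fintype G
  haveI := Fintype.ofFinite (Sylow q G)
  set a := (Nat.card G).factorization q with ha
  have hG0 : Nat.card G ≠ 0 := Nat.card_pos.ne'
  have ha1 : 1 ≤ a := hq.factorization_pos_of_dvd hG0 hqdvd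
  have hQcard : Nat.card Q = q ^ a := Q.card_eq_multiplicity
  set n := q ^ a with hn
  -- q^a divides the exponent
  obtain ⟨g, hg⟩ := hQcyc.exists_generator
  have hog : orderOf (g : G) = n := by
    rw [Subgroup.orderOf_coe, orderOf_eq_card_of_forall_mem_zpowers hg]
    exact hQcard
  have hexp : n ∣ Monoid.exponent G := hog ▸ Monoid.order_dvd_exponent (g : G)
  have hS := hF n ⟨q, a, hq.prime, ha1, rfl⟩ hexp
  set N := Nat.card (Sylow q G) with hN
  -- all Sylow subgroups are cyclic of card q^a
  have hPcyc : ∀ P : Sylow q G, IsCyclic P := fun P =>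
    isCyclic_of_surjective (Sylow.equiv Q P) (Sylow.equiv Q P).surjective
  have hPcard : ∀ P : Sylow q G, Nat.card P = n := fun P => P.card_eq_multiplicity
  -- the sets of generators of the Sylow subgroups
  let T : Sylow q G → Finset G := fun P =>
    (Finset.univ.filter fun y : ↥(P : Subgroup G) => orderOf y = n).image
      ((↑) : ↥(P : Subgroup G) → G)
  have hTmem : ∀ P : Sylow q G, ∀ x : G, x ∈ T P ↔ x ∈ (P : Subgroup G) ∧ orderOf x = n := by
    intro P x
    simp only [T, Finset.mem_image, Finset.mem_filter, Finset.mem_univ, true_and]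
    constructor
    · rintro ⟨y, hy, rfl⟩
      exact ⟨y.2, by rw [Subgroup.orderOf_coe, hy]⟩
    · rintro ⟨hx, hord⟩
      exact ⟨⟨x, hx⟩, by rw [Subgroup.orderOf_mk]; exact hord, rfl⟩
  have hTcard : ∀ P : Sylow q G, (T P).card = n.totient := by
    intro P
    haveI := hPcyc P
    have hd : n ∣ Fintype.card (P : Subgroup G) := by
      rw [← Nat.card_eq_fintype_card, hPcard P]
    rw [Finset.card_image_of_injective _ Subtype.coe_injective]
    exact IsCyclic.card_orderOf_eq_totient hd
  have hzp : ∀ (P : Sylow q G) (x : G), x ∈ (P : Subgroup G) → orderOf x = n →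
      Subgroup.zpowers x = (P : Subgroup G) := by
    intro P x hx hord
    apply aux_eq_of_le_of_card_le (Subgroup.zpowers_le.mpr hx)
    rw [hPcard P, Nat.card_zpowers, hord]
  have hTdisj : ∀ P ∈ (Finset.univ : Finset (Sylow q G)), ∀ P' ∈ Finset.univ, P ≠ P' →
      Disjoint (T P) (T P') := by
    intro P _ P' _ hne
    rw [Finset.disjoint_left]
    intro x hx hx'
    rw [hTmem] at hx hx'
    exact hne (Sylow.ext ((hzp P x hx.1 hx.2).symm.trans (hzp P' x hx'.1 hx'.2)))
  set B : Finset G := Finset.univ.biUnion T with hB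
  have hBcard : B.card = N * n.totient := by
    rw [hB, Finset.card_biUnion hTdisj]
    simp [hTcard, hN, Nat.card_eq_fintype_card]
  -- the small subgroup of Q
  obtain ⟨K, hK⟩ := Sylow.exists_subgroup_card_pow_prime (G := Q) q
      (n := a - 1) (by rw [hQcard]; exact pow_dvd_pow q (Nat.sub_le a 1))
  set Y : Finset G := Finset.univ.filter
      (fun x : G => x ∈ (Q : Subgroup G) ∧ x ^ (q ^ (a - 1)) = 1) with hY
  have hYcard : q ^ (a - 1) ≤ Y.card := by
    have hinj : Set.InjOn (fun k : K => ((k : Q) : G)) (Finset.univ : Finset K) := by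
      intro k1 _ k2 _ h
      exact Subtype.ext (Subtype.ext h)
    have hmem : ∀ k : K, k ∈ (Finset.univ : Finset K) → ((k : Q) : G) ∈ Y := by
      intro k _
      rw [hY, Finset.mem_filter]
      refine ⟨Finset.mem_univ _, (k : Q).2, ?_⟩
      have hdvd : orderOf ((k : Q) : G) ∣ q ^ (a - 1) := by
        rw [Subgroup.orderOf_coe, Subgroup.orderOf_coe, ← hK]
        exact orderOf_dvd_natCard k
      exact orderOf_dvd_iff_pow_eq_one.mp hdvd
    have := Finset.card_le_card_of_injOn _ hmem hinj
    rwa [Finset.card_univ, ← Nat.card_eq_fintype_card, hK] at this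
  -- B and Y are disjoint, and both are sets of solutions of x^n = 1
  have hltpow : q ^ (a - 1) < n := by
    rw [hn]
    exact Nat.pow_lt_pow_right hq.one_lt (by omega)
  have hBYdisj : Disjoint B Y := by
    rw [Finset.disjoint_left]
    intro x hx hy
    rw [hB, Finset.mem_biUnion] at hx
    obtain ⟨P, _, hx⟩ := hx
    rw [hTmem] at hx
    rw [hY, Finset.mem_filter] at hy
    have := Nat.le_of_dvd (Nat.pow_pos hq.pos) (hx.2 ▸ orderOf_dvd_of_pow_eq_one hy.2.2)
    omega
  set S : Finset G := Finset.univ.filter (fun x : G => x ^ n = 1) with hSdef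
  have hsub : B ∪ Y ⊆ S := by
    intro x hx
    rw [hSdef, Finset.mem_filter]
    refine ⟨Finset.mem_univ _, ?_⟩
    rw [Finset.mem_union] at hx
    rcases hx with hx | hx
    · rw [hB, Finset.mem_biUnion] at hx
      obtain ⟨P, _, hx⟩ := hx
      rw [hTmem] at hx
      rw [← hx.2]
      exact pow_orderOf_eq_one x
    · rw [hY, Finset.mem_filter] at hx
      exact orderOf_dvd_iff_pow_eq_one.mp
        ((orderOf_dvd_of_pow_eq_one hx.2.2).trans (pow_dvd_pow q (Nat.sub_le a 1)))
  have hScard : Nat.card {g : G | g ^ n = 1} = S.card := by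
    rw [Nat.card_coe_set_eq, Set.ncard_eq_toFinset_card', Set.toFinset_setOf]
  have hmain : N * n.totient + q ^ (a - 1) ≤ q * n := by
    calc N * n.totient + q ^ (a - 1) ≤ B.card + Y.card := by
          rw [hBcard]; omega
      _ = (B ∪ Y).card := (Finset.card_union_of_disjoint hBYdisj).symm
      _ ≤ S.card := Finset.card_le_card hsub
      _ ≤ q * n := hScard ▸ hS
  -- arithmetic: N ≤ q + 1
  have htot : n.totient = q ^ (a - 1) * (q - 1) := by
    rw [hn, Nat.totient_prime_pow hq (by omega)]
  obtain ⟨b, hb⟩ : ∃ b, a = b + 1 := ⟨a - 1, by omega⟩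
  have hab : a - 1 = b := by omega
  have hqn : q * n = q ^ (a - 1) * (q * q) := by
    rw [hn, hab, hb, pow_succ]
    ring
  have hkey : N * (q - 1) + 1 ≤ q * q := by
    have hpos : 0 < q ^ (a - 1) := Nat.pow_pos hq.pos
    have : q ^ (a - 1) * (N * (q - 1) + 1) ≤ q ^ (a - 1) * (q * q) := by
      rw [← hqn]
      calc q ^ (a - 1) * (N * (q - 1) + 1)
          = N * (q ^ (a - 1) * (q - 1)) + q ^ (a - 1) := by ring
        _ = N * n.totient + q ^ (a - 1) := by rw [htot]
        _ ≤ q * n := hmain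
    exact Nat.le_of_mul_le_mul_left this hpos
  have hNle : N ≤ q + 1 := by
    have hq1 : 0 < q - 1 := by have := hq.two_le; omega
    have : N * (q - 1) ≤ (q + 1) * (q - 1) := by
      have := hq.two_le
      have h2 : (q + 1) * (q - 1) = q * q - 1 := by cases q with
        | zero => omega
        | succ m => simp [Nat.succ_sub_one]; ring_nf; omega
      omega
    exact Nat.le_of_mul_le_mul_right this hq1
  -- N ≡ 1 mod q, N ≠ 1
  have hmod : N ≡ 1 [MOD q] := card_sylow_modEq_one q G
  have hN1 : N ≠ 1 := by
    intro h1
    apply hQnn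
    haveI : Subsingleton (Sylow q G) := (Nat.card_eq_one_iff_unique.mp h1).1
    rw [← Subgroup.normalizer_eq_top_iff, eq_top_iff']
    intro x
    exact Sylow.smul_eq_iff_mem_normalizer.mp (Subsingleton.elim _ _)
  have hNpos : 0 < N := Nat.card_pos
  have hdvdN1 : q ∣ N - 1 := (Nat.modEq_iff_dvd' (by omega)).mp hmod.symm
  have hNeq : N = q + 1 := by
    have := Nat.le_of_dvd (by omega) hdvdN1
    omega
  -- N divides |G|
  have hNdvd : N ∣ Nat.card G := by
    rw [hN, Sylow.card_eq_index_normalizer Q]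
    exact Subgroup.index_dvd_card _
  have hq2 : q = 2 := by
    by_contra hne
    have hodd : Odd q := hq.odd_of_ne_two hne
    have h2 : (2 : ℕ) ∣ q + 1 := by
      obtain ⟨m, hm⟩ := hodd; omega
    have := hqmin 2 Nat.prime_two (dvd_trans (hNeq ▸ h2) hNdvd)
    have := hq.two_le
    omega
  exact ⟨hq2, by rw [hNeq, hq2]⟩
end

section
/- Let m ≥ 1 and G = ⟨a, b | a^(2^m) = b³ = 1, a⁻¹ba = b⁻¹⟩, a group of order 3·2^m. Then for every prime-power divisor n of the exponent of G, the number of elements g in G with g^n = 1 is at most 2n. -/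
/-!
Every element is `b ^ j * a ^ i`. For even `i` the two factors commute and have coprime orders
3 and `2 ^ m`, so for a prime power `n` a solution of `g ^ n = 1` is a power of `a` or a power of
`b`, and a cyclic group has at most `n` solutions. For odd `i` the `a`-exponent of `g ^ n` is
`i * n`, so `g ^ n = 1` forces `2 ^ m ∣ n`. In that case the even solutions are the
`2 ^ (m - 1)` powers of `a ^ 2`, and the `3 * 2 ^ (m - 1)` odd elements make up the rest, giving
at most `2 ^ (m + 1) ≤ 2 * n` solutions.
-/

open Subgroup
open scoped Pointwise

section

variable {G : Type*} [Group G]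

theorem Commute.pow_eq_one_of_mul_pow_eq_one {x y : G} (hxy : Commute x y) {p q n : ℕ}
    (hx : x ^ p = 1) (hy : y ^ q = 1) (hpq : p.Coprime q) (h : (x * y) ^ n = 1) :
    x ^ n = 1 ∧ y ^ n = 1 := by
  have hxn : x ^ n = (y ^ n)⁻¹ := eq_inv_of_mul_eq_one_left (hxy.mul_pow n ▸ h)
  have hxn1 : x ^ n = 1 := (pow_eq_one_iff_of_coprime hpq).1
    ⟨by rw [← pow_mul, mul_comm, pow_mul, hx, one_pow],
     by rw [hxn, inv_pow, ← pow_mul, mul_comm, pow_mul, hy, one_pow, inv_one]⟩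
  exact ⟨hxn1, inv_eq_one.1 (hxn ▸ hxn1)⟩

theorem IsPrimePow.coprime_or_coprime {n p q : ℕ} (hn : IsPrimePow n) (hp : p.Prime)
    (hq : q.Prime) (hpq : p ≠ q) : n.Coprime p ∨ n.Coprime q := by
  obtain ⟨r, k, hr, -, rfl⟩ := hn
  rw [← Nat.prime_iff] at hr
  rcases eq_or_ne r p with rfl | hrp
  · exact .inr (((Nat.coprime_primes hr hq).2 hpq).pow_left k)
  · exact .inl (((Nat.coprime_primes hr hp).2 hrp).pow_left k)

theorem card_setOf_pow_eq_one_le_of_subset_zpowers [Finite G] {x : G} {n : ℕ} (hn : 0 < n)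
    (h : {g : G | g ^ n = 1} ⊆ zpowers x) : Nat.card {g : G | g ^ n = 1} ≤ n := by
  classical
  have := Fintype.ofFinite G
  calc Nat.card {g : G | g ^ n = 1}
      ≤ Nat.card {y : zpowers x // y ^ n = 1} :=
        Nat.card_le_card_of_injective (fun g ↦ ⟨⟨g, h g.2⟩, Subtype.ext g.2⟩)
          fun g g' hgg' ↦ Subtype.ext (congrArg (fun y ↦ (y.1 : G)) hgg')
    _ = Finset.card {y : zpowers x | y ^ n = 1} := by
        rw [Nat.card_eq_fintype_card, Fintype.card_subtype]
    _ ≤ n := IsCyclic.card_pow_eq_one_le hn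

variable {a b : G} {m n : ℕ} {i j : ℤ}

theorem mul_zpow_eq_zpow_neg_mul (hrel : a⁻¹ * b * a = b⁻¹) (j : ℤ) :
    a * b ^ j = b ^ (-j) * a := by
  have h : a * b * a⁻¹ = b⁻¹ :=
    calc a * b * a⁻¹ = a * (a⁻¹ * b * a)⁻¹ * a⁻¹ := by rw [hrel, inv_inv]
      _ = b⁻¹ := by group
  rw [zpow_neg, ← inv_zpow, ← h, conj_zpow, inv_mul_cancel_right]

theorem inv_mul_zpow_eq_zpow_neg_mul_inv (hrel : a⁻¹ * b * a = b⁻¹) (j : ℤ) :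
    a⁻¹ * b ^ j = b ^ (-j) * a⁻¹ := by
  have h : a⁻¹ * b * a⁻¹⁻¹ = b⁻¹ := by rw [inv_inv, hrel]
  rw [zpow_neg, ← inv_zpow, ← h, conj_zpow, inv_mul_cancel_right]

theorem exists_zpow_mul_zpow_eq_zpow_mul_zpow (hrel : a⁻¹ * b * a = b⁻¹) (i j : ℤ) :
    ∃ k : ℤ, a ^ i * b ^ j = b ^ k * a ^ i := by
  induction i using Int.induction_on generalizing j with
  | zero => exact ⟨j, by simp⟩
  | succ i ih =>
    obtain ⟨k, hk⟩ := ih (-j)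
    refine ⟨k, ?_⟩
    rw [zpow_add_one, mul_assoc, mul_zpow_eq_zpow_neg_mul hrel, ← mul_assoc, hk, mul_assoc]
  | pred i ih =>
    obtain ⟨k, hk⟩ := ih (-j)
    refine ⟨k, ?_⟩
    rw [zpow_sub_one, mul_assoc, inv_mul_zpow_eq_zpow_neg_mul_inv hrel, ← mul_assoc, hk,
      mul_assoc]

theorem exists_eq_zpow_mul_zpow (hrel : a⁻¹ * b * a = b⁻¹) (hgen : closure {a, b} = ⊤)
    (g : G) :
    ∃ j i : ℤ, g = b ^ j * a ^ i := by
  have hg : g ∈ closure {a, b} := hgen ▸ mem_top g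
  induction hg using closure_induction with
  | mem x hx =>
    rcases hx with rfl | rfl
    · exact ⟨0, 1, by simp⟩
    · exact ⟨1, 0, by simp⟩
  | one => exact ⟨0, 0, by simp⟩
  | mul x y _ _ hx hy =>
    obtain ⟨j, i, rfl⟩ := hx
    obtain ⟨j', i', rfl⟩ := hy
    obtain ⟨k, hk⟩ := exists_zpow_mul_zpow_eq_zpow_mul_zpow hrel i j'
    refine ⟨j + k, i + i', ?_⟩
    rw [zpow_add, zpow_add, mul_assoc, ← mul_assoc (a ^ i), hk]
    group
  | inv x _ hx =>
    obtain ⟨j, i, rfl⟩ := hx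
    obtain ⟨k, hk⟩ := exists_zpow_mul_zpow_eq_zpow_mul_zpow hrel (-i) (-j)
    exact ⟨k, -i, by rw [mul_inv_rev, ← zpow_neg, ← zpow_neg, hk]⟩

theorem exists_zpow_mul_zpow_pow_eq (hrel : a⁻¹ * b * a = b⁻¹) (j i : ℤ) (n : ℕ) :
    ∃ k : ℤ, (b ^ j * a ^ i) ^ n = b ^ k * a ^ (i * n) := by
  induction n with
  | zero => exact ⟨0, by simp⟩
  | succ n ih =>
    obtain ⟨k, hk⟩ := ih
    obtain ⟨k', hk'⟩ := exists_zpow_mul_zpow_eq_zpow_mul_zpow hrel (i * n) j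
    refine ⟨k + k', ?_⟩
    rw [pow_succ, hk, mul_assoc, ← mul_assoc (a ^ _), hk', Nat.cast_succ, mul_add_one, zpow_add,
      zpow_add]
    group

theorem commute_zpow_of_even (hrel : a⁻¹ * b * a = b⁻¹) (hi : Even i) (j : ℤ) :
    Commute (b ^ j) (a ^ i) := by
  obtain ⟨t, rfl⟩ := hi
  have h : Commute b (a ^ (2 : ℤ)) := by
    have h₁ := mul_zpow_eq_zpow_neg_mul hrel 1
    have h₂ := mul_zpow_eq_zpow_neg_mul hrel (-1)
    simp only [zpow_one, zpow_neg, inv_inv] at h₁ h₂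
    calc b * a ^ (2 : ℤ) = a * b⁻¹ * a := by rw [zpow_two, ← mul_assoc, ← h₂]
      _ = a ^ (2 : ℤ) * b := by rw [mul_assoc, ← h₁, ← mul_assoc, zpow_two]
  rw [← two_mul, zpow_mul]
  exact h.zpow_zpow j t

theorem pow_eq_one_of_even (hrel : a⁻¹ * b * a = b⁻¹) (ha : orderOf a = 2 ^ m)
    (hb : orderOf b = 3) (hi : Even i) (h : (b ^ j * a ^ i) ^ n = 1) :
    (b ^ j) ^ n = 1 ∧ (a ^ i) ^ n = 1 :=
  (commute_zpow_of_even hrel hi j).pow_eq_one_of_mul_pow_eq_one (hb ▸ zpow_pow_orderOf)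
    (ha ▸ zpow_pow_orderOf) (Nat.Coprime.pow_right m (by norm_num)) h

theorem two_pow_dvd_of_odd (hrel : a⁻¹ * b * a = b⁻¹) (ha : orderOf a = 2 ^ m)
    (hb : orderOf b = 3) (hi : Odd i) (h : (b ^ j * a ^ i) ^ n = 1) : 2 ^ m ∣ n := by
  obtain ⟨k, hk⟩ := exists_zpow_mul_zpow_pow_eq hrel j i n
  have hbk : a ^ (i * n) = b ^ (-k) := by
    rw [zpow_neg]; exact eq_inv_of_mul_eq_one_right (hk ▸ h)
  have hain : a ^ (i * n) = 1 :=
    (pow_eq_one_iff_of_coprime (Nat.Coprime.pow_left m (by norm_num : Nat.Coprime 2 3))).1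
      ⟨ha ▸ zpow_pow_orderOf, hbk ▸ hb ▸ zpow_pow_orderOf⟩
  rw [← orderOf_dvd_iff_zpow_eq_one, ha, Nat.cast_pow, Nat.cast_ofNat] at hain
  have hcop : IsCoprime ((2 : ℤ) ^ m) i := (Int.isCoprime_two_left.2 hi).pow_left
  exact_mod_cast hcop.dvd_of_dvd_mul_left hain

theorem setOf_pow_eq_one_subset_zpowers_of_coprime_two (hrel : a⁻¹ * b * a = b⁻¹)
    (hgen : closure {a, b} = ⊤) (hm : 1 ≤ m) (ha : orderOf a = 2 ^ m) (hb : orderOf b = 3)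
    (hn : n.Coprime 2) : {g : G | g ^ n = 1} ⊆ zpowers b := by
  intro g hg
  obtain ⟨j, i, rfl⟩ := exists_eq_zpow_mul_zpow hrel hgen g
  rcases Int.even_or_odd i with hi | hi
  · have hai : a ^ i = 1 := (pow_eq_one_iff_of_coprime (hn.pow_right m)).1
      ⟨(pow_eq_one_of_even hrel ha hb hi hg).2, ha ▸ zpow_pow_orderOf⟩
    rw [hai, mul_one]
    exact zpow_mem_zpowers b j
  · have h2n : 2 ∣ n := (dvd_pow_self 2 (by omega)).trans (two_pow_dvd_of_odd hrel ha hb hi hg)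
    exact absurd (Nat.Coprime.coprime_dvd_left h2n hn) (by norm_num)

theorem setOf_pow_eq_one_subset_zpowers_of_coprime_three (hrel : a⁻¹ * b * a = b⁻¹)
    (hgen : closure {a, b} = ⊤) (ha : orderOf a = 2 ^ m) (hb : orderOf b = 3)
    (hn : n.Coprime 3) (hdvd : ¬ 2 ^ m ∣ n) : {g : G | g ^ n = 1} ⊆ zpowers a := by
  intro g hg
  obtain ⟨j, i, rfl⟩ := exists_eq_zpow_mul_zpow hrel hgen g
  rcases Int.even_or_odd i with hi | hi
  · have hbj : b ^ j = 1 := (pow_eq_one_iff_of_coprime hn).1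
      ⟨(pow_eq_one_of_even hrel ha hb hi hg).1, hb ▸ zpow_pow_orderOf⟩
    rw [hbj, one_mul]
    exact zpow_mem_zpowers a i
  · exact absurd (two_pow_dvd_of_odd hrel ha hb hi hg) hdvd

theorem setOf_pow_eq_one_subset_of_coprime_three (hrel : a⁻¹ * b * a = b⁻¹)
    (hgen : closure {a, b} = ⊤) (ha : orderOf a = 2 ^ m) (hb : orderOf b = 3)
    (hn : n.Coprime 3) :
    {g : G | g ^ n = 1} ⊆ zpowers (a ^ 2) ∪ zpowers b * (a • zpowers (a ^ 2) : Set G) := by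
  intro g hg
  obtain ⟨j, i, rfl⟩ := exists_eq_zpow_mul_zpow hrel hgen g
  rcases Int.even_or_odd i with ⟨t, rfl⟩ | ⟨t, rfl⟩
  · have hbj : b ^ j = 1 := (pow_eq_one_iff_of_coprime hn).1
      ⟨(pow_eq_one_of_even hrel ha hb ⟨t, rfl⟩ hg).1, hb ▸ zpow_pow_orderOf⟩
    left
    rw [hbj, one_mul, ← two_mul, zpow_mul, zpow_ofNat]
    exact zpow_mem_zpowers _ t
  · right
    refine Set.mul_mem_mul (zpow_mem_zpowers b j)
      (Set.mem_smul_set.2 ⟨_, zpow_mem_zpowers _ t, ?_⟩)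
    rw [smul_eq_mul, ← zpow_ofNat, ← zpow_mul, ← zpow_one_add, add_comm, two_mul]

theorem card_setOf_pow_eq_one_le_of_coprime_three [Finite G] (hrel : a⁻¹ * b * a = b⁻¹)
    (hgen : closure {a, b} = ⊤) (hm : 1 ≤ m) (ha : orderOf a = 2 ^ m) (hb : orderOf b = 3)
    (hn : n.Coprime 3) : Nat.card {g : G | g ^ n = 1} ≤ 2 * 2 ^ m := by
  have hY : 2 * Nat.card (zpowers (a ^ 2)) = 2 ^ m := by
    rw [Nat.card_zpowers, orderOf_pow_of_dvd two_ne_zero (ha ▸ dvd_pow_self 2 (by omega)), ha,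
      Nat.mul_div_cancel' (dvd_pow_self 2 (by omega))]
  calc Nat.card {g : G | g ^ n = 1}
      ≤ Nat.card ↥((zpowers (a ^ 2) : Set G) ∪ zpowers b * (a • zpowers (a ^ 2) : Set G)) :=
        Nat.card_mono (Set.toFinite _) (setOf_pow_eq_one_subset_of_coprime_three hrel hgen ha hb hn)
    _ ≤ Nat.card (zpowers (a ^ 2)) + Nat.card (zpowers b) * Nat.card (zpowers (a ^ 2)) := by
        grw [Set.card_union_le, Set.natCard_mul_le, Set.natCard_smul_set]; rfl
    _ = 2 * 2 ^ m := by rw [Nat.card_zpowers b, hb, ← hY]; ring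

end

theorem stmt_17_general (m : ℕ) (hm : 1 ≤ m) (G : Type*) [Group G] [Finite G] (a b : G)
    (ha : orderOf a = 2 ^ m) (hb : orderOf b = 3)
    (hrel : a⁻¹ * b * a = b⁻¹)
    (hgen : Subgroup.closure {a, b} = ⊤) :
    ∀ n : ℕ, IsPrimePow n → n ∣ Monoid.exponent G →
      Nat.card {g : G | g ^ n = 1} ≤ 2 * n := by
  intro n hn _
  rcases hn.coprime_or_coprime Nat.prime_three Nat.prime_two (by norm_num) with h3 | h2
  · by_cases hdvd : 2 ^ m ∣ n
    · calc Nat.card {g : G | g ^ n = 1} ≤ 2 * 2 ^ m :=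
            card_setOf_pow_eq_one_le_of_coprime_three hrel hgen hm ha hb h3
        _ ≤ 2 * n := by grw [Nat.le_of_dvd hn.pos hdvd]
    · grw [card_setOf_pow_eq_one_le_of_subset_zpowers hn.pos
        (setOf_pow_eq_one_subset_zpowers_of_coprime_three hrel hgen ha hb h3 hdvd)]
      omega
  · grw [card_setOf_pow_eq_one_le_of_subset_zpowers hn.pos
      (setOf_pow_eq_one_subset_zpowers_of_coprime_two hrel hgen hm ha hb h2)]
    omega

theorem stmt_17 (m : ℕ) (hm : 1 ≤ m) (G : Type*) [Group G] [Finite G] (a b : G)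
    (hcard : Nat.card G = 3 * 2 ^ m)
    (ha : orderOf a = 2 ^ m) (hb : orderOf b = 3)
    (hrel : a⁻¹ * b * a = b⁻¹)
    (hgen : Subgroup.closure {a, b} = ⊤) :
    ∀ n : ℕ, IsPrimePow n → n ∣ Monoid.exponent G →
      Nat.card {g : G | g ^ n = 1} ≤ 2 * n :=
  stmt_17_general m hm G a b ha hb hrel hgen
end

section
/- Let G be a finite group and q the smallest prime divisor of |G|. If for every prime-power divisor n of exp(G) the number of elements g with g^n = 1 is strictly less than q·n, then G is cyclic. -/
open Finset

theorem stmt_18 (G : Type*) [Group G] [Finite G] (q : ℕ) (hq : q.Prime)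
    (hqdvd : q ∣ Nat.card G)
    (hqmin : ∀ p : ℕ, p.Prime → p ∣ Nat.card G → q ≤ p)
    (hF : ∀ n : ℕ, IsPrimePow n → n ∣ Monoid.exponent G →
      Nat.card {g : G | g ^ n = 1} < q * n) :
    IsCyclic G := by
  classical
  cases nonempty_fintype G
  have hE0 : Monoid.exponent G ≠ 0 := Monoid.exponent_ne_zero_of_finite
  have hcard0 : Nat.card G ≠ 0 := Nat.card_pos.ne'
  have key : ∀ (p : ℕ), p.Prime → p ∣ Nat.card G → ∀ P : Sylow p G,
      Nat.card P = p ^ (Monoid.exponent G).factorization p ∧ IsCyclic P ∧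
      (P : Subgroup G).Normal := by
    intro p hp hpdvd P
    haveI := Fact.mk hp
    set k := (Monoid.exponent G).factorization p with hk
    -- p divides the exponent
    obtain ⟨g0, hg0⟩ := exists_prime_orderOf_dvd_card' (G := G) p hpdvd
    have hpE : p ∣ Monoid.exponent G := hg0 ▸ Monoid.order_dvd_exponent g0
    have hkpos : 0 < k := hp.factorization_pos_of_dvd hE0 hpE
    obtain ⟨m, hm⟩ : ∃ m, k = m + 1 := ⟨k - 1, (Nat.succ_pred_eq_of_pos hkpos).symm⟩
    have hnE : p ^ k ∣ Monoid.exponent G := Nat.ordProj_dvd _ p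
    have hpp : IsPrimePow (p ^ k) := ⟨p, k, hp.prime, hkpos, rfl⟩
    have hqp : q ≤ p := hqmin p hp hpdvd
    -- counting set
    set A : Finset G := univ.filter (fun a => a ^ (p ^ k) = 1) with hA
    have hAcard : Nat.card {g : G | g ^ (p ^ k) = 1} = A.card := by
      rw [Nat.card_eq_fintype_card, Fintype.card_subtype]
      simp only [Set.mem_setOf_eq, hA]
    have hcount : A.card < q * p ^ k := hAcard ▸ hF (p ^ k) hpp hnE
    -- every element of a Sylow p-subgroup is killed by p^k
    have hQsub : ∀ Q : Sylow p G, ∀ x : G, x ∈ Q → x ^ (p ^ k) = 1 := by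
      intro Q x hx
      rw [← orderOf_dvd_iff_pow_eq_one]
      obtain ⟨a, ha⟩ := IsPGroup.iff_card.mp Q.isPGroup'
      obtain ⟨j, _, hj⟩ := (Nat.dvd_prime_pow hp).mp
        (ha ▸ Subgroup.orderOf_dvd_natCard (Q : Subgroup G) hx)
      rw [hj]
      exact pow_dvd_pow p ((Nat.Prime.pow_dvd_iff_le_factorization hp hE0).mp
        (hj ▸ Monoid.order_dvd_exponent x))
    -- an element of order p ^ k
    obtain ⟨g, hg⟩ := hp.exists_orderOf_eq_pow_factorization_exponent (G := G)
    rw [← hk] at hg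
    -- every Sylow p-subgroup has cardinality p ^ k
    have hcardSyl : ∀ Q : Sylow p G, Nat.card Q = p ^ k := by
      intro Q
      rw [Sylow.card_eq_multiplicity]
      congr 1
      have hlow : k ≤ (Nat.card G).factorization p := by
        rw [← Nat.Prime.pow_dvd_iff_le_factorization hp hcard0, ← hg]
        exact orderOf_dvd_natCard g
      have hsub : (univ.filter (fun a : G => a ∈ Q)) ⊆ A := by
        intro a haa
        simp only [mem_filter, mem_univ, true_and, hA] at haa ⊢
        exact hQsub Q a haa
      have hup : p ^ (Nat.card G).factorization p < p ^ (k + 1) := by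
        calc p ^ (Nat.card G).factorization p = Nat.card Q := (Sylow.card_eq_multiplicity Q).symm
        _ = (univ.filter (fun a : G => a ∈ Q)).card := by
            rw [Nat.card_eq_fintype_card]; exact Fintype.card_subtype _
        _ ≤ A.card := card_le_card hsub
        _ < q * p ^ k := hcount
        _ ≤ p * p ^ k := Nat.mul_le_mul_right _ hqp
        _ = p ^ (k + 1) := by ring
      have hub : (Nat.card G).factorization p < k + 1 :=
        (Nat.pow_lt_pow_iff_right hp.one_lt).mp hup
      omega
    -- the cyclic subgroup generated by g is a Sylow subgroup
    have hzcard : Nat.card (Subgroup.zpowers g) = p ^ k := by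
      rw [Nat.card_zpowers, hg]
    obtain ⟨Q0, hQ0⟩ := (IsPGroup.of_card hzcard).exists_le_sylow
    have hzQ0 : Subgroup.zpowers g = (Q0 : Subgroup G) :=
      Subgroup.eq_of_le_of_card_ge hQ0 (by rw [hzcard, hcardSyl Q0])
    -- every Sylow p-subgroup is cyclic
    have hcycQ0 : IsCyclic Q0 := by
      refine isCyclic_of_orderOf_eq_card (⟨g, hQ0 (Subgroup.mem_zpowers g)⟩ : Q0) ?_
      rw [Subgroup.orderOf_mk, hg, hcardSyl Q0]
    have hcyc : ∀ Q : Sylow p G, IsCyclic Q := fun Q =>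
      isCyclic_of_surjective (Sylow.equiv Q0 Q) (Sylow.equiv Q0 Q).surjective
    refine ⟨hcardSyl P, hcyc P, ?_⟩
    -- normality via counting
    by_contra hnot
    have hnontriv : Nontrivial (Sylow p G) := by
      by_contra hsing
      rw [not_nontrivial_iff_subsingleton] at hsing
      refine hnot (Subgroup.normalizer_eq_top_iff.mp ?_)
      rw [Subgroup.eq_top_iff']
      intro x
      exact Sylow.smul_eq_iff_mem_normalizer.mp (Subsingleton.elim _ _)
    haveI : Fintype (Sylow p G) := Fintype.ofFinite _
    set N := Fintype.card (Sylow p G) with hN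
    have hN2 : 2 ≤ N := Fintype.one_lt_card
    have hNmod : N ≡ 1 [MOD p] := by
      have := card_sylow_modEq_one p G
      rwa [Nat.card_eq_fintype_card] at this
    have hNp : p + 1 ≤ N := by
      have h1 : p ∣ N - 1 := (Nat.modEq_iff_dvd' (by omega)).mp hNmod.symm
      have h2 : p ≤ N - 1 := Nat.le_of_dvd (by omega) h1
      omega
    -- generators of each Sylow subgroup
    set gen : Sylow p G → Finset G :=
      fun Q => univ.filter (fun a => a ∈ Q ∧ orderOf a = p ^ k) with hgen
    have hgencard : ∀ Q : Sylow p G, (gen Q).card = Nat.totient (p ^ k) := by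
      intro Q
      haveI := hcyc Q
      have himg : gen Q = Finset.image (Subtype.val)
          (univ.filter (fun x : Q => orderOf x = p ^ k)) := by
        ext a
        simp only [hgen, mem_filter, mem_univ, true_and, Finset.mem_image]
        constructor
        · rintro ⟨ha, hoa⟩
          exact ⟨⟨a, ha⟩, by rw [Subgroup.orderOf_mk]; exact hoa, rfl⟩
        · rintro ⟨x, hx, rfl⟩
          exact ⟨x.2, by rw [← Subgroup.orderOf_coe] at hx; exact hx⟩
      rw [himg, Finset.card_image_of_injective _ Subtype.val_injective]
      have hd : p ^ k ∣ Fintype.card Q := by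
        rw [← Nat.card_eq_fintype_card, hcardSyl Q]
      exact IsCyclic.card_orderOf_eq_totient hd
    have hgendisj : ∀ Q1 Q2 : Sylow p G, Q1 ≠ Q2 → Disjoint (gen Q1) (gen Q2) := by
      intro Q1 Q2 hne
      rw [Finset.disjoint_left]
      intro a ha1 ha2
      simp only [hgen, mem_filter, mem_univ, true_and] at ha1 ha2
      have h1 : Subgroup.zpowers a = (Q1 : Subgroup G) :=
        Subgroup.eq_of_le_of_card_ge (Subgroup.zpowers_le.mpr ha1.1)
          (by rw [Nat.card_zpowers, ha1.2, hcardSyl Q1])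
      have h2 : Subgroup.zpowers a = (Q2 : Subgroup G) :=
        Subgroup.eq_of_le_of_card_ge (Subgroup.zpowers_le.mpr ha2.1)
          (by rw [Nat.card_zpowers, ha2.2, hcardSyl Q2])
      exact hne (Sylow.ext (h1 ▸ h2))
    set T : Finset G := univ.biUnion gen with hT
    have hTcard : T.card = N * Nat.totient (p ^ k) := by
      rw [hT, Finset.card_biUnion (fun Q1 _ Q2 _ h => hgendisj Q1 Q2 h)]
      rw [Finset.sum_congr rfl (fun Q _ => hgencard Q), Finset.sum_const, smul_eq_mul, hN,
        Finset.card_univ]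
    set Pfin : Finset G := univ.filter (fun a => a ∈ P) with hPfin
    have hPfincard : Pfin.card = p ^ k := by
      rw [hPfin, ← Fintype.card_subtype, ← Nat.card_eq_fintype_card]
      exact hcardSyl P
    have hPsdiff : Pfin \ T = Pfin \ gen P := by
      ext a
      simp only [Finset.mem_sdiff, hT, Finset.mem_biUnion, mem_univ, true_and, hPfin, hgen,
        mem_filter, not_exists]
      tauto
    have hgensub : gen P ⊆ Pfin := by
      intro a ha
      simp only [hgen, mem_filter, mem_univ, true_and] at ha
      simp only [hPfin, mem_filter, mem_univ, true_and]
      exact ha.1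
    have hPsd : (Pfin \ T).card = p ^ k - Nat.totient (p ^ k) := by
      rw [hPsdiff, Finset.card_sdiff_of_subset hgensub, hPfincard, hgencard P]
    have hsubA : T ∪ (Pfin \ T) ⊆ A := by
      intro a ha
      simp only [hA, mem_filter, mem_univ, true_and]
      rcases Finset.mem_union.mp ha with h | h
      · obtain ⟨Q, -, hQ⟩ := Finset.mem_biUnion.mp h
        simp only [hgen, mem_filter, mem_univ, true_and] at hQ
        exact hQsub Q a hQ.1
      · have := (Finset.mem_sdiff.mp h).1
        simp only [hPfin, mem_filter, mem_univ, true_and] at this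
        exact hQsub P a this
    have hunion : (T ∪ (Pfin \ T)).card = T.card + (Pfin \ T).card :=
      Finset.card_union_of_disjoint (Finset.disjoint_sdiff)
    set φ := Nat.totient (p ^ k) with hφ
    have hφval : φ = p ^ m * (p - 1) := by
      rw [hφ, hm]; exact Nat.totient_prime_pow_succ hp m
    have hφle : φ ≤ p ^ k := hφ ▸ Nat.totient_le _
    have hbig : q * p ^ k ≤ A.card := by
      have h1 : N * φ + (p ^ k - φ) ≤ A.card := by
        rw [← hTcard, ← hPsd, ← hunion]
        exact card_le_card hsubA
      have h2 : (p + 1) * φ ≤ N * φ := Nat.mul_le_mul_right _ hNp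
      have h3 : p * φ + p ^ k ≤ A.card := by
        have : (p + 1) * φ + (p ^ k - φ) ≤ A.card := le_trans (by omega) h1
        have hexp : (p + 1) * φ = p * φ + φ := by ring
        omega
      have h4 : p * φ + p ^ k = p ^ (k + 1) := by
        rw [hφval, hm]
        have hp1 : 1 ≤ p := hp.one_lt.le
        calc p * (p ^ m * (p - 1)) + p ^ (m + 1)
            = p ^ (m + 1) * (p - 1) + p ^ (m + 1) := by ring
          _ = p ^ (m + 1) * ((p - 1) + 1) := by ring
          _ = p ^ (m + 1) * p := by rw [Nat.sub_add_cancel hp1]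
          _ = p ^ (m + 1 + 1) := by ring
      calc q * p ^ k ≤ p * p ^ k := Nat.mul_le_mul_right _ hqp
        _ = p ^ (k + 1) := by ring
        _ = p * φ + p ^ k := h4.symm
        _ ≤ A.card := h3
    omega
  -- all Sylow subgroups are normal
  have hnorm : ∀ {p : ℕ} [Fact p.Prime] (P : Sylow p G), (P : Subgroup G).Normal := by
    intro p hp P
    by_cases hdvd : p ∣ Nat.card G
    · exact (key p hp.out hdvd P).2.2
    · have hbot : (P : Subgroup G) = ⊥ := by
        rw [← Subgroup.card_eq_one]
        obtain ⟨a, ha⟩ := IsPGroup.iff_card.mp P.isPGroup'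
        rcases Nat.eq_zero_or_pos a with rfl | hapos
        · simpa using ha
        · exfalso
          refine hdvd (dvd_trans ?_ (P : Subgroup G).card_subgroup_dvd_card)
          rw [ha]
          exact dvd_pow_self p hapos.ne'
      rw [hbot]
      exact inferInstance
  -- G is commutative
  have e := Sylow.directProductOfNormal hnorm
  have hcomm : ∀ a b : G, a * b = b * a := by
    intro a b
    apply e.symm.injective
    rw [map_mul, map_mul]
    funext pp P
    simp only [Pi.mul_apply]
    haveI := Fact.mk (Nat.prime_of_mem_primeFactors pp.2)
    haveI : IsCyclic P := (key pp.1 (Nat.prime_of_mem_primeFactors pp.2)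
      (Nat.dvd_of_mem_primeFactors pp.2) P).2.1
    letI : CommGroup P := IsCyclic.commGroup
    exact mul_comm _ _
  letI : CommGroup G := { (inferInstance : Group G) with mul_comm := hcomm }
  -- exponent equals cardinality
  have hdvd1 : Monoid.exponent G ∣ Nat.card G :=
    Monoid.exponent_dvd.mpr fun g => orderOf_dvd_natCard g
  have hdvd2 : Nat.card G ∣ Monoid.exponent G := by
    rw [← Nat.factorization_le_iff_dvd hcard0 hE0]
    intro p
    by_cases hp : p.Prime
    · by_cases hpd : p ∣ Nat.card G
      · haveI := Fact.mk hp
        obtain ⟨P⟩ : Nonempty (Sylow p G) := inferInstance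
        have h1 := (key p hp hpd P).1
        have h2 := Sylow.card_eq_multiplicity P
        rw [h1] at h2
        exact le_of_eq (Nat.pow_right_injective hp.two_le h2.symm)
      · rw [Nat.factorization_eq_zero_of_not_dvd hpd]
        exact Nat.zero_le _
    · rw [Nat.factorization_eq_zero_of_not_prime _ hp]
      exact Nat.zero_le _
  exact IsCyclic.of_exponent_eq_card (Nat.dvd_antisymm hdvd1 hdvd2)
end
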